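/- arXiv:math/0404226 — 7 statements merged into one kernel-verified Lean document; each statement's English description precedes it below -/
import Mathlib

section
/- Let θ ∈ (0, π] and a, b > 0. Define x = arctan(sin(θ/2)·sinh(a) / (cosh(b) + cos(θ/2)·cosh(a))) and y = arctan(sin(θ/2)·sinh(b) / (cosh(a) + cos(θ/2)·cosh(b))). Then tan(x + y) = sin(θ/2)·sinh(a+b) / (1 + cos(θ/2)·cosh(a+b)). -/
/-! Write `s = sin (θ/2)` and `c = cos (θ/2) ≥ 0`. Over the common denominator
`(cosh b + c cosh a) (cosh a + c cosh b)`, both `tan x + tan y` and `1 - tan x tan y` carry the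
positive factor `cosh (a - b) + c`, and cancelling it leaves `s sinh (a+b) / (1 + c cosh (a+b))`.
The addition formula for `arctan` applies because `|sinh a sinh b| < cosh a cosh b`
(both `cosh (a ± b)` are positive), whence `tan x tan y < 1`. -/

open Real

lemma tan_arctan_add_arctan {u v : ℝ} (h : u * v < 1) :
    tan (arctan u + arctan v) = (u + v) / (1 - u * v) := by
  rw [arctan_add h, tan_arctan]

lemma abs_sinh_mul_sinh_lt_cosh_mul_cosh (a b : ℝ) :
    |sinh a * sinh b| < cosh a * cosh b := by
  have hplus : 0 < cosh a * cosh b + sinh a * sinh b := cosh_add a b ▸ cosh_pos _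
  have hminus : 0 < cosh a * cosh b - sinh a * sinh b := cosh_sub a b ▸ cosh_pos _
  exact abs_lt.2 ⟨by linarith, by linarith⟩

section ConePoint

variable {s c : ℝ}

lemma cosh_add_mul_cosh_pos (hc : 0 ≤ c) (a b : ℝ) : 0 < cosh b + c * cosh a := by
  have := cosh_pos a
  have := cosh_pos b
  positivity

lemma sq_mul_sinh_mul_sinh_lt (hsc : s ^ 2 + c ^ 2 = 1) (hc : 0 ≤ c) (a b : ℝ) :
    s ^ 2 * (sinh a * sinh b) < (cosh b + c * cosh a) * (cosh a + c * cosh b) := by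
  have hs : s ^ 2 ≤ 1 := by nlinarith
  have hca := cosh_pos a
  have hcb := cosh_pos b
  calc s ^ 2 * (sinh a * sinh b) ≤ s ^ 2 * |sinh a * sinh b| := by
        gcongr; exact le_abs_self _
    _ ≤ |sinh a * sinh b| := mul_le_of_le_one_left (abs_nonneg _) hs
    _ < cosh a * cosh b := abs_sinh_mul_sinh_lt_cosh_mul_cosh a b
    _ ≤ (cosh b + c * cosh a) * (cosh a + c * cosh b) := by
        have : 0 ≤ c * (cosh a ^ 2 + cosh b ^ 2) + c ^ 2 * (cosh a * cosh b) := by positivity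
        linarith

lemma sinh_mul_add_sinh_mul_eq (a b : ℝ) :
    sinh a * (cosh a + c * cosh b) + sinh b * (cosh b + c * cosh a)
      = sinh (a + b) * (cosh (a - b) + c) := by
  rw [sinh_add, cosh_sub]
  linear_combination (-(sinh a * cosh a)) * cosh_sq_sub_sinh_sq b
    + (-(sinh b * cosh b)) * cosh_sq_sub_sinh_sq a

lemma mul_sub_sq_mul_sinh_mul_sinh_eq (hsc : s ^ 2 + c ^ 2 = 1) (a b : ℝ) :
    (cosh b + c * cosh a) * (cosh a + c * cosh b) - s ^ 2 * (sinh a * sinh b)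
      = (cosh (a - b) + c) * (1 + c * cosh (a + b)) := by
  rw [cosh_sub, cosh_add]
  linear_combination (-(c * (cosh b ^ 2 - 1))) * cosh_sq_sub_sinh_sq a
    + (-(c * sinh a ^ 2)) * cosh_sq_sub_sinh_sq b + (-(sinh a * sinh b)) * hsc

theorem tan_arctan_add_arctan_eq (hsc : s ^ 2 + c ^ 2 = 1) (hc : 0 ≤ c) (a b : ℝ) :
    tan (arctan (s * sinh a / (cosh b + c * cosh a))
        + arctan (s * sinh b / (cosh a + c * cosh b)))
      = s * sinh (a + b) / (1 + c * cosh (a + b)) := by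
  have hD₁ := cosh_add_mul_cosh_pos hc a b
  have hD₂ := cosh_add_mul_cosh_pos hc b a
  have hK : 0 < cosh (a - b) + c := by linarith [one_le_cosh (a - b)]
  have hprod :
      s * sinh a / (cosh b + c * cosh a) * (s * sinh b / (cosh a + c * cosh b)) < 1 := by
    rw [div_mul_div_comm, div_lt_one (by positivity)]
    linarith [sq_mul_sinh_mul_sinh_lt hsc hc a b]
  have hsum : s * sinh a / (cosh b + c * cosh a) + s * sinh b / (cosh a + c * cosh b)
      = s * (sinh (a + b) * (cosh (a - b) + c)) /
          ((cosh b + c * cosh a) * (cosh a + c * cosh b)) := by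
    rw [← sinh_mul_add_sinh_mul_eq]
    field_simp
  have hsub : 1 - s * sinh a / (cosh b + c * cosh a) * (s * sinh b / (cosh a + c * cosh b))
      = (cosh (a - b) + c) * (1 + c * cosh (a + b)) /
          ((cosh b + c * cosh a) * (cosh a + c * cosh b)) := by
    rw [← mul_sub_sq_mul_sinh_mul_sinh_eq hsc]
    field_simp
  rw [tan_arctan_add_arctan hprod, hsum, hsub, div_div_div_cancel_right₀ (by positivity),
    mul_comm (cosh (a - b) + c), ← mul_assoc, mul_div_mul_right _ _ hK.ne']

end ConePoint

theorem tan_add_gap_cone_point_general (θ a b x y : ℝ)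
    (hθ : θ ∈ Set.Ioc 0 π)
    (hx : x = Real.arctan (Real.sin (θ/2) * Real.sinh a /
      (Real.cosh b + Real.cos (θ/2) * Real.cosh a)))
    (hy : y = Real.arctan (Real.sin (θ/2) * Real.sinh b /
      (Real.cosh a + Real.cos (θ/2) * Real.cosh b))) :
    Real.tan (x + y) = Real.sin (θ/2) * Real.sinh (a + b) /
      (1 + Real.cos (θ/2) * Real.cosh (a + b)) := by
  have hc : 0 ≤ cos (θ / 2) :=
    cos_nonneg_of_mem_Icc ⟨by linarith [pi_pos, hθ.1], by linarith [hθ.2]⟩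
  rw [hx, hy]
  exact tan_arctan_add_arctan_eq (sin_sq_add_cos_sq _) hc a b

theorem tan_add_gap_cone_point (θ a b x y : ℝ)
    (hθ : θ ∈ Set.Ioc 0 π) (ha : 0 < a) (hb : 0 < b)
    (hx : x = Real.arctan (Real.sin (θ/2) * Real.sinh a /
      (Real.cosh b + Real.cos (θ/2) * Real.cosh a)))
    (hy : y = Real.arctan (Real.sin (θ/2) * Real.sinh b /
      (Real.cosh a + Real.cos (θ/2) * Real.cosh b))) :
    Real.tan (x + y) = Real.sin (θ/2) * Real.sinh (a + b) /
      (1 + Real.cos (θ/2) * Real.cosh (a + b)) :=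
  tan_add_gap_cone_point_general θ a b x y hθ hx hy
end

section
/- Let θ ∈ (0, π] and s ≥ 0. If tan(w) = sin(θ/2)·sinh(s) / (1 + cos(θ/2)·cosh(s)) with w ∈ [0, π/2), then tan(w/2) = tan(θ/4)·tanh(s/2). -/
/-!
With `t = tan (θ/4)` and `u = tanh (s/2)`, the double-angle formulas for `sin, cos, sinh, cosh`
turn the right-hand side of the hypothesis into `2tu / (1 - (tu)²) = tan (2 arctan (tu))`.
Since `|tu| < 1`, both `w` and `2 arctan (tu)` lie in `(-π/2, π/2)`, where `tan` is injective,
so `w/2 = arctan (tu)`.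
-/

open Real

namespace Real

theorem abs_tan_le_one_of_abs_le_pi_div_four {x : ℝ} (hx : |x| ≤ π / 4) : |tan x| ≤ 1 := by
  obtain ⟨hx₁, hx₂⟩ := abs_le.mp hx
  have hπ := pi_pos
  have hmem : ∀ {y : ℝ}, -(π / 4) ≤ y → y ≤ π / 4 → y ∈ Set.Ioo (-(π / 2)) (π / 2) :=
    fun h₁ h₂ ↦ ⟨by linarith, by linarith⟩
  have hleft := hmem le_rfl (by linarith)
  have hright := hmem (by linarith) le_rfl
  refine abs_le.mpr ⟨?_, ?_⟩
  · calc -1 = tan (-(π / 4)) := by rw [tan_neg, tan_pi_div_four]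
      _ ≤ tan x := strictMonoOn_tan.monotoneOn hleft (hmem hx₁ hx₂) hx₁
  · calc tan x ≤ tan (π / 4) := strictMonoOn_tan.monotoneOn (hmem hx₁ hx₂) hright hx₂
      _ = 1 := tan_pi_div_four

theorem arctan_mem_Ioo_of_abs_lt_one {x : ℝ} (hx : |x| < 1) :
    arctan x ∈ Set.Ioo (-(π / 4)) (π / 4) := by
  obtain ⟨hx₁, hx₂⟩ := abs_lt.mp hx
  rw [← arctan_one, ← arctan_neg]
  exact ⟨arctan_strictMono hx₁, arctan_strictMono hx₂⟩

theorem one_add_cos_two_mul_mul_cosh_two_mul {a b : ℝ} (ha : cos a ≠ 0) :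
    1 + cos (2 * a) * cosh (2 * b) =
      2 * cos a ^ 2 * cosh b ^ 2 * (1 - (tan a * tanh b) ^ 2) := by
  rw [cos_two_mul, cosh_two_mul, tan_eq_sin_div_cos, tanh_eq_sinh_div_cosh]
  field_simp
  linear_combination (2 * sinh b ^ 2) * sin_sq a + sinh_sq b

theorem sin_two_mul_mul_sinh_two_mul {a b : ℝ} (ha : cos a ≠ 0) :
    sin (2 * a) * sinh (2 * b) = 2 * cos a ^ 2 * cosh b ^ 2 * (2 * (tan a * tanh b)) := by
  rw [sin_two_mul, sinh_two_mul, tan_eq_sin_div_cos, tanh_eq_sinh_div_cosh]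
  field_simp

/-- Both denominators vanish together, so no hypothesis on them is needed. -/
theorem sin_two_mul_mul_sinh_two_mul_div {a b : ℝ} (ha : cos a ≠ 0) :
    sin (2 * a) * sinh (2 * b) / (1 + cos (2 * a) * cosh (2 * b)) =
      2 * (tan a * tanh b) / (1 - (tan a * tanh b) ^ 2) := by
  rw [sin_two_mul_mul_sinh_two_mul ha, one_add_cos_two_mul_mul_cosh_two_mul ha,
    mul_div_mul_left _ _ (by positivity)]

theorem tan_half_eq_of_tan_eq {w x : ℝ} (hw : w ∈ Set.Ioo (-(π / 2)) (π / 2)) (hx : |x| < 1)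
    (h : tan w = 2 * x / (1 - x ^ 2)) : tan (w / 2) = x := by
  obtain ⟨harctan₁, harctan₂⟩ := arctan_mem_Ioo_of_abs_lt_one hx
  have htan : tan (2 * arctan x) = tan w := by rw [tan_two_mul, tan_arctan, h]
  have hw' : 2 * arctan x = w :=
    injOn_tan ⟨by linarith, by linarith⟩ hw htan
  rw [← hw', mul_div_cancel_left₀ _ two_ne_zero, tan_arctan]

end Real

theorem tan_half_gap_cone_point_general (θ s w : ℝ)
    (hθ : θ ∈ Set.Ioc 0 π) (hw : w ∈ Set.Ico 0 (π/2))
    (htan : Real.tan w = Real.sin (θ/2) * Real.sinh s /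
      (1 + Real.cos (θ/2) * Real.cosh s)) :
    Real.tan (w / 2) = Real.tan (θ/4) * Real.tanh (s/2) := by
  obtain ⟨hθ₀, hθπ⟩ := hθ
  have hπ := pi_pos
  have hquarter : |θ / 4| ≤ π / 4 := by rw [abs_of_pos (by positivity)]; linarith
  have hcos : cos (θ / 4) ≠ 0 := (cos_pos_of_mem_Ioo ⟨by linarith, by linarith⟩).ne'
  have hprod : |tan (θ / 4) * tanh (s / 2)| < 1 := by
    rw [abs_mul]
    exact mul_lt_one_of_nonneg_of_lt_one_right (abs_tan_le_one_of_abs_le_pi_div_four hquarter)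
      (abs_nonneg _) (abs_tanh_lt_one _)
  rw [show θ / 2 = 2 * (θ / 4) by ring, show s = 2 * (s / 2) by ring,
    sin_two_mul_mul_sinh_two_mul_div hcos] at htan
  exact tan_half_eq_of_tan_eq ⟨by linarith [hw.1], hw.2⟩ hprod htan

theorem tan_half_gap_cone_point (θ s w : ℝ)
    (hθ : θ ∈ Set.Ioc 0 π) (hs : 0 ≤ s) (hw : w ∈ Set.Ico 0 (π/2))
    (htan : Real.tan w = Real.sin (θ/2) * Real.sinh s /
      (1 + Real.cos (θ/2) * Real.cosh s)) :
    Real.tan (w / 2) = Real.tan (θ/4) * Real.tanh (s/2) :=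
  tan_half_gap_cone_point_general θ s w hθ hw htan
end

section
/- For θ ∈ (0, π] and s ≥ 0, if w satisfies tan(w/2) = tan(θ/4)·tanh(s/2) with w/2 ∈ [0, π/4), then tan(θ/4 - w/2) = sin(θ/2) / (cos(θ/2) + exp(s)). -/
open Real

theorem tan_quarter_gap_cone_point (θ s w : ℝ)
    (hθ : θ ∈ Set.Ioc 0 π) (hs : 0 ≤ s) (hw : w / 2 ∈ Set.Ico 0 (π/4))
    (htan : Real.tan (w / 2) = Real.tan (θ/4) * Real.tanh (s/2)) :
    Real.tan (θ/4 - w/2) = Real.sin (θ/2) / (Real.cos (θ/2) + Real.exp s) := by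
  obtain ⟨hθ0, hθπ⟩ := hθ
  obtain ⟨hw0, hwlt⟩ := hw
  have hpi := Real.pi_pos
  have hca : 0 < Real.cos (θ/4) := Real.cos_pos_of_mem_Ioo ⟨by linarith, by linarith⟩
  have hcb : 0 < Real.cos (w/2) := Real.cos_pos_of_mem_Ioo ⟨by linarith, by linarith⟩
  have hcab : 0 < Real.cos (θ/4 - w/2) :=
    Real.cos_pos_of_mem_Ioo ⟨by linarith, by linarith⟩
  have hu : (1:ℝ) ≤ Real.exp s := Real.one_le_exp hs
  have hchalf : 0 ≤ Real.cos (θ/2) :=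
    Real.cos_nonneg_of_mem_Icc ⟨by linarith, by linarith⟩
  have hden : 0 < Real.cos (θ/2) + Real.exp s := by linarith
  have hE : Real.tanh (s/2) = (Real.exp s - 1) / (Real.exp s + 1) := by
    rw [Real.tanh_eq_sinh_div_cosh, Real.sinh_eq, Real.cosh_eq]
    rw [show -(s/2) = -(s/2) from rfl]
    have h1 : Real.exp (s/2) ≠ 0 := Real.exp_ne_zero _
    have h2 : Real.exp (s/2) * Real.exp (s/2) = Real.exp s := by
      rw [← Real.exp_add]; ring_nf
    rw [Real.exp_neg]
    field_simp
    nlinarith [Real.exp_pos (s/2), Real.exp_pos s]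
  have hrel : Real.sin (w/2) * Real.cos (θ/4) * (Real.exp s + 1)
      = Real.sin (θ/4) * Real.cos (w/2) * (Real.exp s - 1) := by
    have h := htan
    rw [Real.tan_eq_sin_div_cos, Real.tan_eq_sin_div_cos, hE] at h
    have hu1 : Real.exp s + 1 ≠ 0 := by positivity
    field_simp at h
    linarith [h]
  have hθ2 : θ/2 = 2 * (θ/4) := by ring
  rw [Real.tan_eq_sin_div_cos, Real.sin_sub, Real.cos_sub, hθ2,
    Real.sin_two_mul, Real.cos_two_mul]
  have hpyth : Real.sin (θ/4)^2 + Real.cos (θ/4)^2 = 1 := Real.sin_sq_add_cos_sq _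
  have hd2 : Real.cos (θ/4) * Real.cos (w/2) + Real.sin (θ/4) * Real.sin (w/2) ≠ 0 := by
    rw [← Real.cos_sub]; exact ne_of_gt hcab
  have hd3 : 2 * Real.cos (θ/4)^2 - 1 + Real.exp s ≠ 0 := by
    rw [← Real.cos_two_mul, ← hθ2]; exact ne_of_gt hden
  rw [div_eq_div_iff hd2 hd3]
  linear_combination (-1) * hrel - 2 * Real.cos (θ/4) * Real.sin (w/2) * hpyth
end

section
/- For l > 0 and s ≥ 0: if tanh(w) = sinh(l/2)·sinh(s) / (1 + cosh(l/2)·cosh(s)), then tanh(w/2) = tanh(l/4)·tanh(s/2). -/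
open Real
set_option maxHeartbeats 1000000

theorem tanh_half_gap_boundary_geodesic (l s w : ℝ)
    (hl : 0 < l) (hs : 0 ≤ s)
    (htanh : Real.tanh w = Real.sinh (l/2) * Real.sinh s /
      (1 + Real.cosh (l/2) * Real.cosh s)) :
    Real.tanh (w / 2) = Real.tanh (l/4) * Real.tanh (s/2) := by
  set S1 := Real.sinh (l/4) with hS1def
  set C1 := Real.cosh (l/4) with hC1def
  set S2 := Real.sinh (s/2) with hS2def
  set C2 := Real.cosh (s/2) with hC2def
  set S3 := Real.sinh (w/2) with hS3def
  set C3 := Real.cosh (w/2) with hC3def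
  have hC1 : 0 < C1 := Real.cosh_pos _
  have hC2 : 0 < C2 := Real.cosh_pos _
  have hC3 : 0 < C3 := Real.cosh_pos _
  have hS1 : 0 ≤ S1 := Real.sinh_nonneg_iff.mpr (by linarith)
  have hS2 : 0 ≤ S2 := Real.sinh_nonneg_iff.mpr (by linarith)
  have h1 : C1 ^ 2 - S1 ^ 2 = 1 := by
    rw [hC1def, hS1def]; rw [Real.cosh_sq]; ring
  have h2 : C2 ^ 2 - S2 ^ 2 = 1 := by
    rw [hC2def, hS2def]; rw [Real.cosh_sq]; ring
  have h3 : C3 ^ 2 - S3 ^ 2 = 1 := by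
    rw [hC3def, hS3def]; rw [Real.cosh_sq]; ring
  have hC1S1 : S1 < C1 := by
    have := Real.cosh_sub_sinh (l/4)
    nlinarith [Real.exp_pos (-(l/4))]
  have hC2S2 : S2 < C2 := by
    have := Real.cosh_sub_sinh (s/2)
    nlinarith [Real.exp_pos (-(s/2))]
  have hC3S3 : S3 < C3 := by
    have := Real.cosh_sub_sinh (w/2)
    nlinarith [Real.exp_pos (-(w/2))]
  -- double angle formulas
  have hsw : Real.sinh w = 2 * S3 * C3 := by
    rw [hS3def, hC3def, ← Real.sinh_two_mul]; ring_nf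
  have hcw : Real.cosh w = C3 ^ 2 + S3 ^ 2 := by
    rw [hC3def, hS3def, ← Real.cosh_two_mul]; ring_nf
  have hsl : Real.sinh (l/2) = 2 * S1 * C1 := by
    rw [hS1def, hC1def, ← Real.sinh_two_mul]; ring_nf
  have hcl : Real.cosh (l/2) = C1 ^ 2 + S1 ^ 2 := by
    rw [hC1def, hS1def, ← Real.cosh_two_mul]; ring_nf
  have hss : Real.sinh s = 2 * S2 * C2 := by
    rw [hS2def, hC2def, ← Real.sinh_two_mul]; ring_nf
  have hcs : Real.cosh s = C2 ^ 2 + S2 ^ 2 := by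
    rw [hC2def, hS2def, ← Real.cosh_two_mul]; ring_nf
  have hden : (0:ℝ) < 1 + Real.cosh (l/2) * Real.cosh s := by
    nlinarith [Real.one_le_cosh (l/2), Real.one_le_cosh s]
  have hcwpos : (0:ℝ) < Real.cosh w := Real.cosh_pos _
  -- clear denominators in the hypothesis
  have hE : Real.sinh w * (1 + Real.cosh (l/2) * Real.cosh s)
      = Real.sinh (l/2) * Real.sinh s * Real.cosh w := by
    rw [Real.tanh_eq_sinh_div_cosh] at htanh
    field_simp at htanh
    linarith [htanh]
  rw [hsw, hcw, hsl, hcl, hss, hcs] at hE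
  -- key factorization
  have key : (S3 * C1 * C2 - S1 * S2 * C3) * (C1 * C2 * C3 - S1 * S2 * S3) = 0 := by
    linear_combination (1/4) * hE + (1/2) * S3 * C3 * (C2^2 - S2^2) * h1
      + (1/2) * S3 * C3 * h2
  have h12 : S1 * S2 < C1 * C2 := by nlinarith
  have hpos : 0 < C1 * C2 * C3 - S1 * S2 * S3 := by
    rcases le_or_gt 0 S3 with h | h
    · have h1' : S1 * S2 * S3 ≤ C1 * C2 * S3 :=
        mul_le_mul_of_nonneg_right h12.le h
      have h2' : C1 * C2 * S3 < C1 * C2 * C3 :=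
        (mul_lt_mul_iff_right₀ (mul_pos hC1 hC2)).mpr hC3S3
      linarith
    · have : S1 * S2 * S3 ≤ 0 := mul_nonpos_of_nonneg_of_nonpos (mul_nonneg hS1 hS2) h.le
      nlinarith [mul_pos (mul_pos hC1 hC2) hC3]
  have hkey : S3 * C1 * C2 = S1 * S2 * C3 := by
    rcases mul_eq_zero.mp key with h | h
    · linarith
    · linarith
  rw [Real.tanh_eq_sinh_div_cosh, Real.tanh_eq_sinh_div_cosh, Real.tanh_eq_sinh_div_cosh]
  rw [← hS1def, ← hC1def, ← hS2def, ← hC2def, ← hS3def, ← hC3def]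
  field_simp
  linear_combination hkey
end

section
/- For l > 0 and s ≥ 0, tanh(l/4 - (1/2)·artanh(sinh(l/2)·sinh(s)/(1 + cosh(l/2)·cosh(s)))) = sinh(l/2) / (cosh(l/2) + exp(s)). Equivalently, if tanh(w/2) = tanh(l/4)·tanh(s/2), then tanh(l/4 - w/2) = sinh(l/2)/(cosh(l/2) + eˢ). -/
/-!
Write `C₊ = cosh ((l/2 + s)/2)`, `C₋ = cosh ((l/2 - s)/2)` and `X` for the argument of `artanh`.
Since `1 + cosh a cosh b ± sinh a sinh b = 1 + cosh (a ± b) = 2 cosh² ((a ± b)/2)`, the quotient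
`(1 + X)/(1 - X)` is `(C₊/C₋)²`, so `artanh X = log (C₊/C₋)`. The left-hand side is then
`tanh (½ log (e^{l/2} C₋ / C₊)) = (e^{l/2} C₋ - C₊)/(e^{l/2} C₋ + C₊)`, which becomes the
right-hand side after expanding in hyperbolic functions of `l/4` and `s/2`.
-/

open Real

/-- The real inverse hyperbolic tangent. -/
noncomputable def artanh (x : ℝ) : ℝ := (1/2) * Real.log ((1 + x) / (1 - x))

lemma Real.one_add_cosh (x : ℝ) : 1 + cosh x = 2 * cosh (x / 2) ^ 2 := by
  conv_lhs => rw [← mul_div_cancel₀ x two_ne_zero, cosh_two_mul]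
  linear_combination -cosh_sq (x / 2)

lemma artanh_sinh_mul_sinh_div (a b : ℝ) :
    _root_.artanh (sinh a * sinh b / (1 + cosh a * cosh b))
      = log (cosh ((a + b) / 2) / cosh ((a - b) / 2)) := by
  have hD : 0 < 1 + cosh a * cosh b := by positivity
  have hplus : 1 + sinh a * sinh b / (1 + cosh a * cosh b)
      = 2 * cosh ((a + b) / 2) ^ 2 / (1 + cosh a * cosh b) := by
    rw [← one_add_cosh, cosh_add]; field_simp; ring
  have hminus : 1 - sinh a * sinh b / (1 + cosh a * cosh b)
      = 2 * cosh ((a - b) / 2) ^ 2 / (1 + cosh a * cosh b) := by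
    rw [← one_add_cosh, cosh_sub]; field_simp; ring
  have hratio : (1 + sinh a * sinh b / (1 + cosh a * cosh b))
      / (1 - sinh a * sinh b / (1 + cosh a * cosh b))
      = (cosh ((a + b) / 2) / cosh ((a - b) / 2)) ^ 2 := by
    rw [hplus, hminus]; field_simp
  rw [_root_.artanh, hratio, log_pow]
  ring

lemma Real.tanh_half_log_div {p q : ℝ} (hp : 0 < p) (hq : 0 < q) :
    tanh (log (p / q) / 2) = (p - q) / (p + q) := by
  have hsq : exp (log (p / q) / 2) ^ 2 = p / q := by
    rw [← exp_nat_mul, Nat.cast_ofNat, mul_div_cancel₀ _ two_ne_zero, exp_log (by positivity)]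
  have := exp_pos (log (p / q) / 2)
  rw [tanh_eq, exp_neg]
  field_simp
  rw [hsq]
  field_simp

lemma Real.sinh_div_cosh_add_exp (a b : ℝ) :
    sinh a / (cosh a + exp b)
      = (exp a * cosh ((a - b) / 2) - cosh ((a + b) / 2))
        / (exp a * cosh ((a - b) / 2) + cosh ((a + b) / 2)) := by
  have hden : 0 < cosh a + exp b := by positivity
  have hden' : 0 < exp a * cosh ((a - b) / 2) + cosh ((a + b) / 2) := by positivity
  rw [div_eq_div_iff hden.ne' hden'.ne']
  obtain ⟨x, rfl⟩ : ∃ x, a = 2 * x := ⟨a / 2, by ring⟩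
  obtain ⟨y, rfl⟩ : ∃ y, b = 2 * y := ⟨b / 2, by ring⟩
  rw [show (2 * x - 2 * y) / 2 = x - y by ring, show (2 * x + 2 * y) / 2 = x + y by ring,
    cosh_sub, cosh_add]
  simp only [← cosh_add_sinh, cosh_two_mul, sinh_two_mul]
  -- Modulo `cosh x ^ 2 - sinh x ^ 2 = 1`, the numerator on the right is
  -- `sinh (2x) (cosh x + sinh x) (cosh y - sinh y)` and the denominator
  -- `(cosh (2x) + exp (2y)) (cosh x + sinh x) (cosh y - sinh y)`.
  linear_combination
    (2 * sinh x * cosh x * (cosh x + sinh x) * (cosh y + sinh y)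
      - 2 * sinh x * cosh x * (cosh x * cosh y + sinh x * sinh y)
      - (cosh x * cosh y + sinh x * sinh y) * (cosh x ^ 2 + sinh x ^ 2 + (cosh y + sinh y) ^ 2))
      * cosh_sq_sub_sinh_sq x
    - 2 * sinh x * cosh x * (cosh x + sinh x) * (cosh y + sinh y) * cosh_sq_sub_sinh_sq y

theorem tanh_quarter_gap_boundary_geodesic_general (l s : ℝ) :
    Real.tanh (l/4 - (1/2) * _root_.artanh (Real.sinh (l/2) * Real.sinh s /
        (1 + Real.cosh (l/2) * Real.cosh s)))
      = Real.sinh (l/2) / (Real.cosh (l/2) + Real.exp s) := by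
  have harg : l / 4 - 1 / 2 * log (cosh ((l / 2 + s) / 2) / cosh ((l / 2 - s) / 2))
      = log (exp (l / 2) * cosh ((l / 2 - s) / 2) / cosh ((l / 2 + s) / 2)) / 2 := by
    rw [log_div (by positivity) (by positivity), log_div (by positivity) (by positivity),
      log_mul (by positivity) (by positivity), log_exp]
    ring
  rw [artanh_sinh_mul_sinh_div, harg, tanh_half_log_div (by positivity) (by positivity),
    sinh_div_cosh_add_exp]

theorem tanh_quarter_gap_boundary_geodesic (l s : ℝ)
    (hl : 0 < l) (hs : 0 ≤ s) :
    Real.tanh (l/4 - (1/2) * _root_.artanh (Real.sinh (l/2) * Real.sinh s /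
        (1 + Real.cosh (l/2) * Real.cosh s)))
      = Real.sinh (l/2) / (Real.cosh (l/2) + Real.exp s) :=
  tanh_quarter_gap_boundary_geodesic_general l s
end

section
/- For x, z ≥ 0 and y ∈ [0, π/2], the real part of G(x, yi, z) = log((eˣ + e^{yi+z})/(e^{-x} + e^{yi+z})) equals x − artanh(sinh(x)·sinh(z)/(cos(y) + cosh(x)·cosh(z))). -/
open Real Complex

/-- The gap function `G` (logarithmic form, principal branch complex logarithm). -/
noncomputable def G (x y z : ℂ) : ℂ :=
  Complex.log ((Complex.exp x + Complex.exp (y + z)) /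
    (Complex.exp (-x) + Complex.exp (y + z)))

/-! The real part of a logarithm only sees the modulus, and
`|e^a + e^(z + iy)|² = 2 e^(a+z) (cos y + cosh (a - z))`; in the quotient defining `G` the
factors `e^(±x+z)` leave `e^(2x)`, and `cosh (x ± z) = cosh x cosh z ± sinh x sinh z` turns the
remaining ratio into the `artanh` term. -/

theorem Complex.log_re_eq_half_log_normSq (w : ℂ) : (log w).re = Real.log (normSq w) / 2 := by
  rw [log_re, norm_def, Real.log_sqrt (normSq_nonneg w)]

theorem Complex.normSq_exp_add_exp_mul_I_add (a b c : ℝ) :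
    normSq (cexp a + cexp (b * I + c)) = 2 * rexp (a + c) * (Real.cos b + Real.cosh (a - c)) := by
  rw [Complex.exp_add, Complex.exp_mul_I, ← ofReal_exp, ← ofReal_exp, ← ofReal_cos, ← ofReal_sin,
    normSq_apply]
  simp only [add_re, add_im, mul_re, mul_im, ofReal_re, ofReal_im, I_re, I_im]
  rw [Real.cosh_eq, Real.exp_neg, Real.exp_sub, Real.exp_add]
  field_simp
  linear_combination rexp c ^ 2 * Real.sin_sq_add_cos_sq b

theorem Complex.normSq_exp_add_div_exp_neg_add (x y z : ℝ) :
    normSq ((cexp x + cexp (y * I + z)) / (cexp (-x : ℝ) + cexp (y * I + z))) =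
      rexp (2 * x) / ((Real.cos y + Real.cosh (x + z)) / (Real.cos y + Real.cosh (x - z))) := by
  rw [map_div₀, normSq_exp_add_exp_mul_I_add, normSq_exp_add_exp_mul_I_add,
    show -x - z = -(x + z) by ring, Real.cosh_neg, show 2 * x = (x + z) - (-x + z) by ring,
    Real.exp_sub]
  field_simp

theorem artanh_div {s d : ℝ} (hd : d ≠ 0) :
    _root_.artanh (s / d) = Real.log ((d + s) / (d - s)) / 2 := by
  rw [_root_.artanh, one_add_div hd, one_sub_div hd, div_div_div_cancel_right₀ hd]
  ring

theorem re_G_of_imaginary_y_general (x y z : ℝ)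
    (hy : y ∈ Set.Icc 0 (π/2)) :
    (G (x : ℂ) ((y : ℂ) * Complex.I) (z : ℂ)).re =
      x - _root_.artanh (Real.sinh x * Real.sinh z /
        (Real.cos y + Real.cosh x * Real.cosh z)) := by
  have hcos : 0 ≤ Real.cos y :=
    Real.cos_nonneg_of_mem_Icc ⟨by linarith [Real.pi_pos, hy.1], hy.2⟩
  have hpos : ∀ t, 0 < Real.cos y + Real.cosh t := fun t => by positivity
  have hden : Real.cos y + Real.cosh x * Real.cosh z ≠ 0 := by positivity
  rw [G, Complex.log_re_eq_half_log_normSq, ← ofReal_neg, Complex.normSq_exp_add_div_exp_neg_add,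
    artanh_div hden, Real.log_div (Real.exp_ne_zero _)
      (div_pos (hpos _) (hpos _)).ne', Real.log_exp, Real.cosh_add, Real.cosh_sub,
    ← add_assoc, ← add_sub_assoc]
  ring

theorem re_G_of_imaginary_y (x y z : ℝ) (hx : 0 ≤ x) (hz : 0 ≤ z)
    (hy : y ∈ Set.Icc 0 (π/2)) :
    (G (x : ℂ) ((y : ℂ) * Complex.I) (z : ℂ)).re =
      x - _root_.artanh (Real.sinh x * Real.sinh z /
        (Real.cos y + Real.cosh x * Real.cosh z)) :=
  re_G_of_imaginary_y_general x y z hy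
end

section
/- Let θ ∈ (0, π], φ ∈ (0, π], and b > 0. Then θ/2 − arctan(sin(θ/2)·sinh(b)/(cos(φ/2) + cos(θ/2)·cosh(b))) > 0, with equality in the limit θ = φ = π; that is, for θ = φ = π the term arctan(sin(π/2)·sinh(b)/(cos(π/2) + cos(π/2)·cosh(b))), interpreted via the limit θ, φ → π, equals π/2, so the expression equals 0. -/
open Real Filter

theorem gap_two_cone_points (b : ℝ) (hb : 0 < b) :
    (∀ θ φ : ℝ, θ ∈ Set.Ioc 0 π → φ ∈ Set.Ioc 0 π → ¬(θ = π ∧ φ = π) →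
        0 < θ/2 - Real.arctan (Real.sin (θ/2) * Real.sinh b /
          (Real.cos (φ/2) + Real.cos (θ/2) * Real.cosh b))) ∧
      Tendsto (fun p : ℝ × ℝ =>
          Real.arctan (Real.sin (p.1/2) * Real.sinh b /
            (Real.cos (p.2/2) + Real.cos (p.1/2) * Real.cosh b)))
        (nhdsWithin (π, π) (Set.Iio π ×ˢ Set.Iio π)) (nhds (π/2)) := by
  constructor
  · rintro θ φ ⟨hθ0, hθπ⟩ ⟨hφ0, hφπ⟩ hne
    rcases eq_or_lt_of_le hθπ with hθ | hθ
    · -- θ = π : θ/2 = π/2 > arctan anything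
      subst hθ
      have := Real.arctan_lt_pi_div_two (Real.sin (π/2) * Real.sinh b /
          (Real.cos (φ/2) + Real.cos (π/2) * Real.cosh b))
      linarith
    · -- θ < π
      have ht0 : 0 < θ/2 := by linarith
      have ht2 : θ/2 < π/2 := by linarith
      have hsin : 0 < Real.sin (θ/2) :=
        Real.sin_pos_of_pos_of_lt_pi ht0 (by linarith [Real.pi_pos])
      have hcost : 0 < Real.cos (θ/2) :=
        Real.cos_pos_of_mem_Ioo ⟨by linarith, ht2⟩
      have hcφ : 0 ≤ Real.cos (φ/2) :=
        Real.cos_nonneg_of_mem_Icc ⟨by linarith, by linarith⟩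
      have hcosh : 0 < Real.cosh b := Real.cosh_pos b
      have hD : 0 < Real.cos (φ/2) + Real.cos (θ/2) * Real.cosh b := by positivity
      have hkey : Real.sin (θ/2) * Real.sinh b /
          (Real.cos (φ/2) + Real.cos (θ/2) * Real.cosh b) < Real.tan (θ/2) := by
        rw [Real.tan_eq_sin_div_cos, div_lt_div_iff₀ hD hcost]
        have hsc : Real.sinh b < Real.cosh b := Real.sinh_lt_cosh b
        nlinarith [mul_lt_mul_of_pos_left hsc (mul_pos hsin hcost), mul_nonneg hsin.le hcφ]
      have := Real.arctan_strictMono hkey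
      rw [Real.arctan_tan (by linarith) ht2] at this
      linarith
  · set L := nhdsWithin ((π : ℝ), (π : ℝ)) (Set.Iio π ×ˢ Set.Iio π)
    have hnum : Tendsto (fun p : ℝ × ℝ => Real.sin (p.1/2) * Real.sinh b) L
        (nhds (Real.sinh b)) := by
      have hc : Continuous fun p : ℝ × ℝ => Real.sin (p.1/2) * Real.sinh b := by
        continuity
      have h := tendsto_nhdsWithin_of_tendsto_nhds (s := Set.Iio π ×ˢ Set.Iio π) (hc.tendsto (π, π))
      simpa [Real.sin_pi_div_two] using h
    have hg0 : Tendsto (fun p : ℝ × ℝ =>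
        Real.cos (p.2/2) + Real.cos (p.1/2) * Real.cosh b) L (nhds 0) := by
      have hc : Continuous fun p : ℝ × ℝ =>
          Real.cos (p.2/2) + Real.cos (p.1/2) * Real.cosh b := by continuity
      have h := tendsto_nhdsWithin_of_tendsto_nhds (s := Set.Iio π ×ˢ Set.Iio π) (hc.tendsto (π, π))
      simpa [Real.cos_pi_div_two] using h
    have hev : ∀ᶠ p : ℝ × ℝ in L,
        0 < Real.cos (p.2/2) + Real.cos (p.1/2) * Real.cosh b := by
      have h1 : ∀ᶠ p : ℝ × ℝ in L, p ∈ Set.Ioi (0:ℝ) ×ˢ Set.Ioi (0:ℝ) :=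
        eventually_nhdsWithin_of_eventually_nhds
          (Filter.eventually_mem_set.mpr
            (prod_mem_nhds (Ioi_mem_nhds Real.pi_pos) (Ioi_mem_nhds Real.pi_pos)))
      have h2 : ∀ᶠ p : ℝ × ℝ in L, p ∈ Set.Iio π ×ˢ Set.Iio π :=
        eventually_mem_nhdsWithin
      filter_upwards [h1, h2] with p hp1 hp2
      obtain ⟨hx0, hy0⟩ := hp1
      obtain ⟨hxπ, hyπ⟩ := hp2
      simp only [Set.mem_Ioi] at hx0 hy0
      simp only [Set.mem_Iio] at hxπ hyπ
      have hc1 : 0 < Real.cos (p.1/2) :=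
        Real.cos_pos_of_mem_Ioo ⟨by linarith, by linarith⟩
      have hc2 : 0 < Real.cos (p.2/2) :=
        Real.cos_pos_of_mem_Ioo ⟨by linarith, by linarith⟩
      have := Real.cosh_pos b
      positivity
    have hg : Tendsto (fun p : ℝ × ℝ =>
        Real.cos (p.2/2) + Real.cos (p.1/2) * Real.cosh b) L (nhdsWithin 0 (Set.Ioi 0)) := by
      rw [tendsto_nhdsWithin_iff]
      exact ⟨hg0, hev⟩
    have hinv : Tendsto (fun p : ℝ × ℝ =>
        (Real.cos (p.2/2) + Real.cos (p.1/2) * Real.cosh b)⁻¹) L atTop :=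
      tendsto_inv_nhdsGT_zero.comp hg
    have hratio : Tendsto (fun p : ℝ × ℝ =>
        Real.sin (p.1/2) * Real.sinh b /
          (Real.cos (p.2/2) + Real.cos (p.1/2) * Real.cosh b)) L atTop := by
      simp only [div_eq_mul_inv]
      exact Filter.Tendsto.pos_mul_atTop (Real.sinh_pos_iff.mpr hb) hnum hinv
    exact (Real.tendsto_arctan_atTop.mono_right nhdsWithin_le_nhds).comp hratio
end
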